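/- arXiv:1604.08402 — 2 statements merged into one kernel-verified Lean document; each statement's English description precedes it below -/
import Mathlib

section
/- For every ε > 0, the modified Laplace mechanism on a single rating is ε-differentially private: for all x, y ∈ [−1,1] ∪ {?} and every measurable subset S of ℝ ∪ {?}, Pr(M(x) ∈ S) ≤ exp(ε) · Pr(M(y) ∈ S). -/
open MeasureTheory Real

/-- Measurable space structure on `Option α`, via the equivalence with `α ⊕ PUnit`. -/
instance instMeasurableSpaceOption {α : Type u_1} [MeasurableSpace α] :
    MeasurableSpace (Option α) :=
  MeasurableSpace.comap (Equiv.optionEquivSumPUnit.{0, u_1} α) inferInstance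

/-- The Laplace distribution with location `c` and scale `2/ε`,
given by the density `t ↦ (ε/4) * exp (-ε * |t - c| / 2)`. -/
noncomputable def laplaceMeasure (ε c : ℝ) : Measure ℝ :=
  volume.withDensity fun t => ENNReal.ofReal (ε / 4 * Real.exp (-(ε * |t - c|) / 2))

/-- The modified Laplace mechanism on a single rating.  `none` is the missing rating `?`.
A present rating `x` is sent to `x + ξ` with probability `e^{ε/2}/(e^{ε/2}+1)` and to `?`
otherwise; a missing rating is sent to `?` with probability `e^{ε/2}/(e^{ε/2}+1)` and to `ξ`
otherwise, where `ξ ~ Laplace(0, 2/ε)`. -/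
noncomputable def modLaplace (ε : ℝ) (x : Option ℝ) : Measure (Option ℝ) :=
  match x with
  | some r =>
      ENNReal.ofReal (Real.exp (ε / 2) / (Real.exp (ε / 2) + 1)) •
          (laplaceMeasure ε r).map Option.some +
        ENNReal.ofReal (1 / (Real.exp (ε / 2) + 1)) • Measure.dirac (none : Option ℝ)
  | none =>
      ENNReal.ofReal (Real.exp (ε / 2) / (Real.exp (ε / 2) + 1)) •
          Measure.dirac (none : Option ℝ) +
        ENNReal.ofReal (1 / (Real.exp (ε / 2) + 1)) • (laplaceMeasure ε 0).map Option.some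

open scoped ENNReal

/-! Moving the centre of a Laplace density by `δ` changes it pointwise by a factor at most
`e^{ε|δ|/2}`. For two present ratings in `[-1,1]` this bounds the Laplace parts by a factor
`e^ε`; when exactly one rating is missing, the noise is centred at `0` and the factor is only
`e^{ε/2}`, but then the two branch probabilities `p = e^{ε/2}/(e^{ε/2}+1)` and
`q = 1/(e^{ε/2}+1)` swap roles, and `p = e^{ε/2} q` supplies the remaining `e^{ε/2}`. -/

lemma measurable_option_some {α : Type*} [MeasurableSpace α] :
    Measurable (Option.some : α → Option α) := by
  rintro _ ⟨t, ht, rfl⟩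
  exact measurable_inl ht

lemma laplaceMeasure_le_smul {ε b c d : ℝ} (hε : 0 ≤ ε) (hcd : |c - d| ≤ b) :
    laplaceMeasure ε c ≤ ENNReal.ofReal (exp (ε * b / 2)) • laplaceMeasure ε d := by
  rw [laplaceMeasure, laplaceMeasure, ← withDensity_smul' _ _ ENNReal.ofReal_ne_top]
  refine withDensity_mono (Filter.Eventually.of_forall fun t => ?_)
  simp only [Pi.smul_apply, smul_eq_mul, ← ENNReal.ofReal_mul (exp_nonneg _)]
  refine ENNReal.ofReal_le_ofReal ?_
  rw [mul_left_comm, ← exp_add]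
  have htd : |t - d| ≤ |t - c| + b := (abs_sub_le t c d).trans (by gcongr)
  gcongr
  nlinarith

lemma map_some_laplaceMeasure_le_smul {ε b c d : ℝ} (hε : 0 ≤ ε) (hcd : |c - d| ≤ b) :
    (laplaceMeasure ε c).map some ≤
      ENNReal.ofReal (exp (ε * b / 2)) • (laplaceMeasure ε d).map some := by
  rw [← Measure.map_smul]
  exact Measure.map_mono (laplaceMeasure_le_smul hε hcd) measurable_option_some

lemma MeasureTheory.Measure.le_smul_of_one_le {α : Type*} [MeasurableSpace α] (μ : Measure α)
    {a : ℝ≥0∞} (ha : 1 ≤ a) : μ ≤ a • μ :=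
  calc μ = (1 : ℝ≥0∞) • μ := (one_smul _ _).symm
    _ ≤ a • μ := by gcongr

section

variable {ε : ℝ}

lemma ofReal_exp_half_mul_self :
    ENNReal.ofReal (exp (ε / 2)) * ENNReal.ofReal (exp (ε / 2)) = ENNReal.ofReal (exp ε) := by
  rw [← ENNReal.ofReal_mul (exp_nonneg _), ← exp_add, add_halves]

lemma ofReal_exp_half_mul_one_div :
    ENNReal.ofReal (exp (ε / 2)) * ENNReal.ofReal (1 / (exp (ε / 2) + 1)) =
      ENNReal.ofReal (exp (ε / 2) / (exp (ε / 2) + 1)) := by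
  rw [← ENNReal.ofReal_mul (exp_nonneg _), mul_one_div]

lemma one_le_ofReal_exp (hε : 0 ≤ ε) : 1 ≤ ENNReal.ofReal (exp ε) :=
  ENNReal.one_le_ofReal.2 (one_le_exp hε)


lemma modLaplace_some_le_smul_some (hε : 0 ≤ ε) {r s : ℝ} (hrs : |r - s| ≤ 2) :
    modLaplace ε (some r) ≤ ENNReal.ofReal (exp ε) • modLaplace ε (some s) := by
  have hL := map_some_laplaceMeasure_le_smul hε hrs
  rw [mul_div_cancel_right₀ _ two_ne_zero] at hL
  calc modLaplace ε (some r)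
      ≤ _ • (ENNReal.ofReal (exp ε) • (laplaceMeasure ε s).map some) +
          ENNReal.ofReal (exp ε) • (_ • Measure.dirac none) :=
        add_le_add (by gcongr) (Measure.le_smul_of_one_le _ (one_le_ofReal_exp hε))
    _ = ENNReal.ofReal (exp ε) • modLaplace ε (some s) := by rw [smul_comm, ← smul_add]; rfl

lemma modLaplace_some_le_smul_none (hε : 0 ≤ ε) {r : ℝ} (hr : |r| ≤ 1) :
    modLaplace ε (some r) ≤ ENNReal.ofReal (exp ε) • modLaplace ε none := by
  have hL := map_some_laplaceMeasure_le_smul hε (b := 1) (d := 0) (by rwa [sub_zero])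
  rw [mul_one] at hL
  calc modLaplace ε (some r)
      ≤ ENNReal.ofReal (exp (ε / 2) / (exp (ε / 2) + 1)) •
            (ENNReal.ofReal (exp (ε / 2)) • (laplaceMeasure ε 0).map some) +
          ENNReal.ofReal (exp ε) •
            (ENNReal.ofReal (exp (ε / 2) / (exp (ε / 2) + 1)) • Measure.dirac none) := by
        refine add_le_add (by gcongr)
          ((?_ : _ ≤ _).trans (Measure.le_smul_of_one_le _ (one_le_ofReal_exp hε)))
        gcongr
        exact one_le_exp (by positivity)
    _ = ENNReal.ofReal (exp ε) • modLaplace ε none := by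
      rw [modLaplace, smul_add, add_comm, ← ofReal_exp_half_mul_one_div,
        ← ofReal_exp_half_mul_self (ε := ε)]
      simp only [smul_smul]
      congr 2
      ring

lemma modLaplace_none_le_smul_some (hε : 0 ≤ ε) {s : ℝ} (hs : |s| ≤ 1) :
    modLaplace ε none ≤ ENNReal.ofReal (exp ε) • modLaplace ε (some s) := by
  have hL := map_some_laplaceMeasure_le_smul hε (b := 1) (c := 0) (d := s)
    (by rwa [zero_sub, abs_neg])
  rw [mul_one] at hL
  calc modLaplace ε none
      ≤ ENNReal.ofReal (exp ε) •
            (ENNReal.ofReal (1 / (exp (ε / 2) + 1)) • Measure.dirac none) +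
          ENNReal.ofReal (exp ε) • (ENNReal.ofReal (exp (ε / 2) / (exp (ε / 2) + 1)) •
            (laplaceMeasure ε s).map some) := by
        refine add_le_add ?_ ?_
        · rw [← ofReal_exp_half_mul_one_div, ← smul_smul]
          gcongr
          linarith
        · refine (?_ : _ ≤ _).trans (Measure.le_smul_of_one_le _ (one_le_ofReal_exp hε))
          rw [← ofReal_exp_half_mul_one_div, mul_comm, ← smul_smul]
          gcongr
    _ = ENNReal.ofReal (exp ε) • modLaplace ε (some s) := by
      rw [add_comm, ← smul_add]; rfl

end

theorem modLaplace_single_dp_general (ε : ℝ) (hε : 0 < ε) (x y : Option ℝ)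
    (hx : ∀ r : ℝ, x = some r → r ∈ Set.Icc (-1 : ℝ) 1)
    (hy : ∀ r : ℝ, y = some r → r ∈ Set.Icc (-1 : ℝ) 1)
    (S : Set (Option ℝ)) :
    modLaplace ε x S ≤ ENNReal.ofReal (Real.exp ε) * modLaplace ε y S := by
  suffices h : modLaplace ε x ≤ ENNReal.ofReal (exp ε) • modLaplace ε y from h S
  rcases x with _ | r <;> rcases y with _ | s
  · exact Measure.le_smul_of_one_le _ (one_le_ofReal_exp hε.le)
  · exact modLaplace_none_le_smul_some hε.le (abs_le.2 (hy s rfl))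
  · exact modLaplace_some_le_smul_none hε.le (abs_le.2 (hx r rfl))
  · have hr := hx r rfl
    have hs := hy s rfl
    exact modLaplace_some_le_smul_some hε.le
      (abs_sub_le_iff.2 ⟨by linarith [hr.2, hs.1], by linarith [hr.1, hs.2]⟩)

/-- The modified Laplace mechanism on a single rating is `ε`-differentially private. -/
theorem modLaplace_single_dp (ε : ℝ) (hε : 0 < ε) (x y : Option ℝ)
    (hx : ∀ r : ℝ, x = some r → r ∈ Set.Icc (-1 : ℝ) 1)
    (hy : ∀ r : ℝ, y = some r → r ∈ Set.Icc (-1 : ℝ) 1)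
    (S : Set (Option ℝ)) (hS : MeasurableSet S) :
    modLaplace ε x S ≤ ENNReal.ofReal (Real.exp ε) * modLaplace ε y S :=
  modLaplace_single_dp_general ε hε x y hx hy S
end

section
/- In the modified Laplace matrix model, if the true rating matrix Θ has all entries in [−1,1], then the expected squared Frobenius norm on artificially created ratings satisfies E‖P_{Ω_Z \ Ω_X}(Θ − Z)‖_F² ≤ (mn/(e^{ε/2}+1)) · (1 + 8/ε²). -/
open MeasureTheory Real

/-- Distribution of the matrix `Z` obtained by applying the modified Laplace mechanism
independently to every entry of the partially observed rating matrix `X`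
(`none` encodes a missing entry). -/
noncomputable def modLaplaceMatrix (ε : ℝ) {m n : ℕ} (X : Fin m × Fin n → Option ℝ) :
    Measure (Fin m × Fin n → Option ℝ) :=
  Measure.pi fun p => modLaplace ε (X p)

/-- Support of the non-missing entries of a partially observed matrix. -/
def suppOf {m n : ℕ} (A : Fin m × Fin n → Option ℝ) : Finset (Fin m × Fin n) :=
  Finset.univ.filter fun p => (A p).isSome

/-! An entry contributes to the error only if it is missing in `X` and the mechanism creates a
value there, which happens with probability `1/(e^{ε/2}+1)`; the created value is then pure
Laplace noise `ξ`, and since `ξ` is centred with `E ξ² = 8/ε²`, the expected contribution is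
`(θ² + 8/ε²)/(e^{ε/2}+1) ≤ (1 + 8/ε²)/(e^{ε/2}+1)`. Summing over at most `mn` entries gives
the bound. -/

open scoped Nat

section ExpAbsWeight

variable {b : ℝ}

theorem integral_abs_pow_mul_exp_neg_mul_abs (hb : 0 < b) (k : ℕ) :
    ∫ t, |t| ^ k * exp (-(b * |t|)) = 2 * k ! / b ^ (k + 1) := by
  have h := integral_rpow_mul_exp_neg_mul_Ioi (a := k + 1) (by positivity) hb
  rw [add_sub_cancel_right, Gamma_nat_eq_factorial, ← Nat.cast_add_one, rpow_natCast] at h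
  simp_rw [rpow_natCast] at h
  rw [integral_comp_abs (f := fun t => t ^ k * exp (-(b * t))), h, one_div, inv_pow]
  field_simp

theorem integrable_abs_pow_mul_exp_neg_mul_abs (hb : 0 < b) (k : ℕ) :
    Integrable fun t : ℝ => |t| ^ k * exp (-(b * |t|)) :=
  .of_integral_ne_zero <| by rw [integral_abs_pow_mul_exp_neg_mul_abs hb]; positivity

theorem integrable_pow_mul_exp_neg_mul_abs (hb : 0 < b) (k : ℕ) :
    Integrable fun t : ℝ => t ^ k * exp (-(b * |t|)) :=
  (integrable_abs_pow_mul_exp_neg_mul_abs hb k).mono' (by fun_prop) <|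
    ae_of_all _ fun t => by simp

theorem integral_exp_neg_mul_abs (hb : 0 < b) : ∫ t, exp (-(b * |t|)) = 2 / b := by
  simpa using integral_abs_pow_mul_exp_neg_mul_abs hb 0

theorem integrable_exp_neg_mul_abs (hb : 0 < b) : Integrable fun t : ℝ => exp (-(b * |t|)) := by
  simpa using integrable_pow_mul_exp_neg_mul_abs hb 0

theorem integral_mul_exp_neg_mul_abs (b : ℝ) : ∫ t, t * exp (-(b * |t|)) = 0 := by
  have h := integral_neg_eq_self (fun t : ℝ => t * exp (-(b * |t|))) volume
  simp only [abs_neg, neg_mul, integral_neg] at h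
  linarith

theorem integrable_sub_sq_mul_exp_neg_mul_abs (hb : 0 < b) (θ : ℝ) :
    Integrable fun t : ℝ => (θ - t) ^ 2 * exp (-(b * |t|)) := by
  have h0 := integrable_exp_neg_mul_abs hb
  have h1 := integrable_pow_mul_exp_neg_mul_abs hb 1
  have h2 := integrable_pow_mul_exp_neg_mul_abs hb 2
  simp only [pow_one] at h1
  refine (((h0.const_mul (θ ^ 2)).sub (h1.const_mul (2 * θ))).add h2).congr <|
    ae_of_all _ fun t => ?_
  simp only [Pi.add_apply, Pi.sub_apply]
  ring

theorem integral_sub_sq_mul_exp_neg_mul_abs (hb : 0 < b) (θ : ℝ) :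
    ∫ t, (θ - t) ^ 2 * exp (-(b * |t|)) = 2 * θ ^ 2 / b + 4 / b ^ 3 := by
  have h0 := integrable_exp_neg_mul_abs hb
  have h1 := integrable_pow_mul_exp_neg_mul_abs hb 1
  have h2 := integrable_pow_mul_exp_neg_mul_abs hb 2
  have e2 := integral_abs_pow_mul_exp_neg_mul_abs hb 2
  simp only [pow_one, sq_abs] at h1 e2
  have hexp : ∀ t : ℝ, (θ - t) ^ 2 * exp (-(b * |t|))
      = θ ^ 2 * exp (-(b * |t|)) - 2 * θ * (t * exp (-(b * |t|))) + t ^ 2 * exp (-(b * |t|)) :=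
    fun t => by ring
  simp_rw [hexp]
  rw [integral_add ?_ h2, integral_sub ?_ ?_, integral_const_mul, integral_const_mul,
    integral_mul_exp_neg_mul_abs, integral_exp_neg_mul_abs hb, e2]
  · simp [Nat.factorial]
    ring
  all_goals fun_prop

end ExpAbsWeight

section Laplace

variable {ε : ℝ}

theorem lintegral_ofReal_laplaceMeasure (hε : 0 ≤ ε) (c : ℝ) {f : ℝ → ℝ} (hf : 0 ≤ f)
    (hfm : Measurable f) (hfi : Integrable fun t => f t * exp (-(ε / 2 * |t - c|))) :
    ∫⁻ t, ENNReal.ofReal (f t) ∂laplaceMeasure ε c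
      = ENNReal.ofReal (ε / 4 * ∫ t, f t * exp (-(ε / 2 * |t - c|))) := by
  rw [laplaceMeasure, lintegral_withDensity_eq_lintegral_mul _ (by fun_prop) (by fun_prop),
    ← integral_const_mul, ofReal_integral_eq_lintegral_ofReal (hfi.const_mul _)
      (ae_of_all _ fun t => mul_nonneg (by positivity) (mul_nonneg (hf t) (exp_pos _).le))]
  refine lintegral_congr fun t => ?_
  rw [Pi.mul_apply, ← ENNReal.ofReal_mul (by positivity)]
  ring_nf

theorem isProbabilityMeasure_laplaceMeasure (hε : 0 < ε) (c : ℝ) :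
    IsProbabilityMeasure (laplaceMeasure ε c) := by
  have hb : 0 < ε / 2 := half_pos hε
  constructor
  rw [← setLIntegral_one, setLIntegral_univ, ← ENNReal.ofReal_one,
    lintegral_ofReal_laplaceMeasure hε.le c (fun _ => zero_le_one) measurable_const
      (by simpa using (integrable_exp_neg_mul_abs hb).comp_sub_right c)]
  simp_rw [one_mul]
  rw [integral_sub_right_eq_self (fun t => exp (-(ε / 2 * |t|))) c, integral_exp_neg_mul_abs hb]
  field_simp
  norm_num

theorem lintegral_sub_sq_laplaceMeasure_zero (hε : 0 < ε) (θ : ℝ) :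
    ∫⁻ t, ENNReal.ofReal ((θ - t) ^ 2) ∂laplaceMeasure ε 0
      = ENNReal.ofReal (θ ^ 2 + 8 / ε ^ 2) := by
  have hb : 0 < ε / 2 := half_pos hε
  rw [lintegral_ofReal_laplaceMeasure hε.le 0 (f := fun t => (θ - t) ^ 2) (fun t => sq_nonneg _)
    (by fun_prop) (by simpa using integrable_sub_sq_mul_exp_neg_mul_abs hb θ)]
  simp_rw [sub_zero]
  rw [integral_sub_sq_mul_exp_neg_mul_abs hb]
  congr 1
  field_simp
  ring

end Laplace

section OptionMeasurable

variable {α β : Type*} [MeasurableSpace α] [MeasurableSpace β]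

theorem measurable_optionEquivSumPUnit : Measurable (Equiv.optionEquivSumPUnit.{0} α) :=
  comap_measurable _

theorem measurable_some : Measurable (Option.some : α → Option α) := by
  rintro _ ⟨s, hs, rfl⟩
  exact measurable_inl hs

theorem Measurable.option_elim {g : α → β} (hg : Measurable g) (b : β) :
    Measurable fun z : Option α => z.elim b g := by
  have h : (fun z : Option α => z.elim b g)
      = Sum.elim g (fun _ => b) ∘ Equiv.optionEquivSumPUnit α := by
    funext z; cases z <;> rfl
  rw [h]
  exact (hg.sumElim measurable_const).comp measurable_optionEquivSumPUnit

end OptionMeasurable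

def entrySqError (θ : ℝ) (z : Option ℝ) : ENNReal :=
  z.elim 0 fun t => ENNReal.ofReal ((θ - t) ^ 2)

theorem measurable_entrySqError (θ : ℝ) : Measurable (entrySqError θ) :=
  (by fun_prop : Measurable fun t : ℝ => ENNReal.ofReal ((θ - t) ^ 2)).option_elim 0

section ModLaplace

variable {ε : ℝ}

theorem isProbabilityMeasure_modLaplace (hε : 0 < ε) (x : Option ℝ) :
    IsProbabilityMeasure (modLaplace ε x) := by
  have := isProbabilityMeasure_laplaceMeasure hε
  have hsome (c : ℝ) : IsProbabilityMeasure ((laplaceMeasure ε c).map Option.some) :=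
    Measure.isProbabilityMeasure_map measurable_some.aemeasurable
  have hw : ENNReal.ofReal (exp (ε / 2) / (exp (ε / 2) + 1))
      + ENNReal.ofReal (1 / (exp (ε / 2) + 1)) = 1 := by
    rw [← ENNReal.ofReal_add (by positivity) (by positivity), ← add_div,
      div_self (by positivity), ENNReal.ofReal_one]
  constructor
  cases x <;> simpa [modLaplace] using hw

theorem lintegral_modLaplace_none {f : Option ℝ → ENNReal} (hf : Measurable f) :
    ∫⁻ z, f z ∂modLaplace ε none
      = ENNReal.ofReal (exp (ε / 2) / (exp (ε / 2) + 1)) * f none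
        + ENNReal.ofReal (1 / (exp (ε / 2) + 1)) * ∫⁻ t, f (some t) ∂laplaceMeasure ε 0 := by
  rw [modLaplace, lintegral_add_measure, lintegral_smul_measure, lintegral_smul_measure,
    lintegral_dirac' _ hf, lintegral_map hf measurable_some]
  rfl

theorem lintegral_entrySqError_modLaplace_none (hε : 0 < ε) (θ : ℝ) :
    ∫⁻ z, entrySqError θ z ∂modLaplace ε none
      = ENNReal.ofReal (1 / (exp (ε / 2) + 1) * (θ ^ 2 + 8 / ε ^ 2)) := by
  rw [lintegral_modLaplace_none (measurable_entrySqError θ)]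
  simp only [entrySqError, Option.elim, mul_zero, zero_add]
  rw [lintegral_sub_sq_laplaceMeasure_zero hε, ← ENNReal.ofReal_mul (by positivity)]

end ModLaplace

theorem ofReal_sum_sdiff_suppOf {m n : ℕ} (Θ : Fin m × Fin n → ℝ)
    (X Z : Fin m × Fin n → Option ℝ) :
    ENNReal.ofReal (∑ p ∈ suppOf Z \ suppOf X, (Θ p - (Z p).getD 0) ^ 2)
      = ∑ p ∈ (suppOf X)ᶜ, entrySqError (Θ p) (Z p) := by
  have hsupp : suppOf Z \ suppOf X = (suppOf X)ᶜ.filter fun p => (Z p).isSome := by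
    ext p; simp [suppOf, and_comm]
  rw [ENNReal.ofReal_sum_of_nonneg fun _ _ => sq_nonneg _, hsupp, Finset.sum_filter]
  refine Finset.sum_congr rfl fun p _ => ?_
  cases Z p <;> simp [entrySqError]

theorem modLaplace_created_support_bound_general (ε : ℝ) (hε : 0 < ε) (m n : ℕ)
    (Θ : Fin m × Fin n → ℝ) (hΘ : ∀ p, Θ p ∈ Set.Icc (-1 : ℝ) 1)
    (X : Fin m × Fin n → Option ℝ) :
    ∫⁻ Z, ENNReal.ofReal
        (∑ p ∈ suppOf Z \ suppOf X, (Θ p - (Z p).getD 0) ^ 2)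
        ∂modLaplaceMatrix ε X ≤
      ENNReal.ofReal ((m * n : ℝ) / (Real.exp (ε / 2) + 1) * (1 + 8 / ε ^ 2)) := by
  have := fun p => isProbabilityMeasure_modLaplace hε (X p)
  calc _ = ∑ p ∈ (suppOf X)ᶜ, ∫⁻ Z, entrySqError (Θ p) (Z p) ∂modLaplaceMatrix ε X := by
        simp_rw [ofReal_sum_sdiff_suppOf]
        exact lintegral_finsetSum _ fun p _ =>
          (measurable_entrySqError (Θ p)).comp (measurable_pi_apply p)
    _ = ∑ p ∈ (suppOf X)ᶜ, ENNReal.ofReal (1 / (exp (ε / 2) + 1) * (Θ p ^ 2 + 8 / ε ^ 2)) := by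
        refine Finset.sum_congr rfl fun p hp => ?_
        have hXp : X p = none := by simpa [suppOf] using hp
        rw [← lintegral_entrySqError_modLaplace_none hε, ← hXp]
        exact (measurePreserving_eval (fun p => modLaplace ε (X p)) p).lintegral_comp
          (measurable_entrySqError (Θ p))
    _ ≤ ∑ p ∈ (suppOf X)ᶜ, ENNReal.ofReal (1 / (exp (ε / 2) + 1) * (1 + 8 / ε ^ 2)) := by
        refine Finset.sum_le_sum fun p _ => ?_
        have := sq_le_one_iff_abs_le_one (Θ p) |>.2 (abs_le.2 (hΘ p))
        gcongr
    _ ≤ ∑ _p : Fin m × Fin n, ENNReal.ofReal (1 / (exp (ε / 2) + 1) * (1 + 8 / ε ^ 2)) :=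
        Finset.sum_le_sum_of_subset (Finset.subset_univ _)
    _ = _ := by
        rw [Finset.sum_const, Finset.card_univ, Fintype.card_prod, Fintype.card_fin,
          Fintype.card_fin, nsmul_eq_mul, ← ENNReal.ofReal_natCast,
          ← ENNReal.ofReal_mul (by positivity)]
        push_cast
        ring_nf

/-- Modified Laplace matrix model: if the true rating matrix `Θ` has all entries in `[-1,1]`,
the expected squared Frobenius norm on artificially created ratings satisfies
`E‖P_{Ω_Z \ Ω_X}(Θ − Z)‖_F² ≤ (mn/(e^{ε/2}+1)) · (1 + 8/ε²)`. -/
theorem modLaplace_created_support_bound (ε : ℝ) (hε : 0 < ε) (m n : ℕ)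
    (Θ : Fin m × Fin n → ℝ) (hΘ : ∀ p, Θ p ∈ Set.Icc (-1 : ℝ) 1)
    (X : Fin m × Fin n → Option ℝ)
    (hX : ∀ p, ∀ r : ℝ, X p = some r → r ∈ Set.Icc (-1 : ℝ) 1) :
    ∫⁻ Z, ENNReal.ofReal
        (∑ p ∈ suppOf Z \ suppOf X, (Θ p - (Z p).getD 0) ^ 2)
        ∂modLaplaceMatrix ε X ≤
      ENNReal.ofReal ((m * n : ℝ) / (Real.exp (ε / 2) + 1) * (1 + 8 / ε ^ 2)) :=
  modLaplace_created_support_bound_general ε hε m n Θ hΘ X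
end
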